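/- Let a_{kl}(φ,s) be the Taylor coefficients of the kernel, K_α(φ,s;z,u) = Σ_{k,l≥0} a_{kl}(φ,s)·z̄^k u^l. Then for every N,M>0 there exist constants A>0 and τ>0 such that |a_{kl}(φ,s)| ≤ A·(1+k+l)^τ for all k,l≥0, all φ∈[0,2π], and all s∈ℂ with |Im s|≤N and |Re s|≤M. -/

import Mathlib

open MeasureTheory Metric Set
open scoped Real

noncomputable section

/-- The open unit disk in ℂ. -/
def Disk : Set ℂ := Metric.ball (0 : ℂ) 1

/-- The kernel `K_α(φ,s;z,u)`. -/
def Kker (α : ℝ) (φ : ℝ) (s : ℂ) (z u : ℂ) : ℂ :=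
  (1 - (starRingEnd ℂ z) * Complex.exp (Complex.I * φ)) ^ (-(1/2 : ℂ) - Complex.I * s) *
  (1 - u * Complex.exp (-(Complex.I * φ))) ^ (-(1/2 : ℂ) - Complex.I * s) *
  (1 - (starRingEnd ℂ z) * u) ^ (-((α : ℂ) - 1/2 - Complex.I * s))


lemma orth (n : ℤ) :
    (∫ θ in (0:ℝ)..(2*π), Complex.exp (n * Complex.I * θ)) =
      if n = 0 then ((2*π : ℝ) : ℂ) else 0 := by
  rcases eq_or_ne n 0 with rfl | hn
  · simp
  · have hc : (n : ℂ) * Complex.I ≠ 0 :=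
      mul_ne_zero (by exact_mod_cast hn) Complex.I_ne_zero
    rw [if_neg hn, integral_exp_mul_complex hc]
    have h1 : (n : ℂ) * Complex.I * ((2*π : ℝ) : ℂ) = n * (2 * π * Complex.I) := by
      push_cast; ring
    rw [h1, Complex.exp_int_mul_two_pi_mul_I]
    simp

lemma exp_neg_two_mul_le {x : ℝ} (h0 : 0 < x) (h1 : x ≤ 1/2) :
    Real.exp (-(2*x)) ≤ 1 - x := by
  have h2 : 1 + 2*x ≤ Real.exp (2*x) := by
    have := Real.add_one_le_exp (2*x); linarith
  have h3 : Real.exp (-(2*x)) = 1 / Real.exp (2*x) := by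
    rw [Real.exp_neg]; ring
  rw [h3, div_le_iff₀ (Real.exp_pos _)]
  nlinarith [Real.exp_pos (2*x)]

lemma cpow_bound {w c : ℂ} {δ P Q : ℝ} (hδ0 : 0 < δ) (hδ1 : δ ≤ 1)
    (hw1 : δ ≤ ‖w‖) (hw2 : ‖w‖ ≤ 2)
    (hre : |c.re| ≤ P) (him : |c.im| ≤ Q) :
    ‖w ^ c‖ ≤ δ⁻¹ ^ P * 2 ^ P * Real.exp (π * Q) := by
  have hw0 : w ≠ 0 := by
    intro h; rw [h] at hw1; simp at hw1; linarith
  rw [Complex.norm_cpow_of_ne_zero hw0]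
  have hP : 0 ≤ P := le_trans (abs_nonneg _) hre
  have hδinv : (1:ℝ) ≤ δ⁻¹ := (one_le_inv_iff₀).mpr ⟨hδ0, hδ1⟩
  have h1 : ‖w‖ ^ c.re ≤ δ⁻¹ ^ P * 2 ^ P := by
    rcases le_or_gt 0 c.re with h | h
    · have hA : ‖w‖ ^ c.re ≤ 2 ^ c.re :=
        Real.rpow_le_rpow (norm_nonneg w) hw2 h
      have hB : (2:ℝ) ^ c.re ≤ 2 ^ P :=
        Real.rpow_le_rpow_of_exponent_le one_le_two (le_trans (le_abs_self _) hre)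
      have hC : (1:ℝ) ≤ δ⁻¹ ^ P := Real.one_le_rpow hδinv hP
      nlinarith [Real.rpow_nonneg (le_of_lt (by norm_num : (0:ℝ) < 2)) P]
    · have hA : ‖w‖ ^ c.re ≤ δ ^ c.re :=
        Real.rpow_le_rpow_of_nonpos hδ0 hw1 h.le
      have hB : δ ^ c.re = δ⁻¹ ^ (-c.re) := by
        rw [Real.inv_rpow hδ0.le, ← Real.rpow_neg hδ0.le, neg_neg]
      have hC : δ⁻¹ ^ (-c.re) ≤ δ⁻¹ ^ P :=
        Real.rpow_le_rpow_of_exponent_le hδinv (le_trans (neg_le_abs _) hre)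
      have hD : (1:ℝ) ≤ 2 ^ P := Real.one_le_rpow one_le_two hP
      have hE : (0:ℝ) ≤ δ⁻¹ ^ P := Real.rpow_nonneg (by positivity) P
      nlinarith
  have h2 : (Real.exp (Complex.arg w * c.im))⁻¹ ≤ Real.exp (π * Q) := by
    rw [← Real.exp_neg]
    apply Real.exp_le_exp.mpr
    calc -(Complex.arg w * c.im) ≤ |Complex.arg w * c.im| := neg_le_abs _
      _ = |Complex.arg w| * |c.im| := abs_mul _ _
      _ ≤ π * Q := by
          apply mul_le_mul (Complex.abs_arg_le_pi w) him (abs_nonneg _) Real.pi_pos.le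
  have h3 : (0:ℝ) ≤ ‖w‖ ^ c.re := Real.rpow_nonneg (norm_nonneg w) _
  calc ‖w‖ ^ c.re / Real.exp (Complex.arg w * c.im)
      = ‖w‖ ^ c.re * (Real.exp (Complex.arg w * c.im))⁻¹ := by
        rw [div_eq_mul_inv]
    _ ≤ (δ⁻¹ ^ P * 2 ^ P) * Real.exp (π * Q) := by
        apply mul_le_mul h1 h2 (by positivity) (by positivity)

lemma coeff_bound (c : ℕ → ℂ) (g : ℂ → ℂ) (r B : ℝ) (hr0 : 0 < r)
    (hsum : ∀ θ : ℝ, HasSum (fun j => c j * ((r : ℂ) * Complex.exp (Complex.I * θ)) ^ j)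
      (g ((r : ℂ) * Complex.exp (Complex.I * θ))))
    (hbound : ∀ θ : ℝ, ‖g ((r : ℂ) * Complex.exp (Complex.I * θ))‖ ≤ B)
    (k : ℕ) : ‖c k‖ * r ^ k ≤ B := by
  have h2π : (0:ℝ) < 2 * π := by positivity
  have hs0 : Summable (fun j => ‖c j‖ * r ^ j) := by
    have h := (hsum 0).summable
    simp only [Complex.ofReal_zero, mul_zero, Complex.exp_zero, mul_one] at h
    refine (summable_norm_iff.mpr h).congr fun j => ?_
    simp [abs_of_pos hr0]
  set μ := volume.restrict (Set.Ioc (0:ℝ) (2*π)) with hμ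
  have hμfin : volume (Set.Ioc (0:ℝ) (2*π)) < ⊤ := by
    rw [Real.volume_Ioc]; exact ENNReal.ofReal_lt_top
  set F : ℕ → ℝ → ℂ := fun j θ =>
    c j * ((r:ℂ) * Complex.exp (Complex.I * θ)) ^ j * Complex.exp (-(k:ℂ) * Complex.I * θ)
    with hF
  have habs1 : ∀ θ : ℝ, ‖Complex.exp (Complex.I * θ)‖ = 1 := by
    intro θ; rw [mul_comm]; exact Complex.norm_exp_ofReal_mul_I θ
  have habs2 : ∀ θ : ℝ, ‖Complex.exp (-(k:ℂ) * Complex.I * θ)‖ = 1 := by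
    intro θ
    have h : (-(k:ℂ) * Complex.I * θ) = ((-((k:ℝ) * θ) : ℝ) : ℂ) * Complex.I := by
      push_cast; ring
    rw [h]; exact Complex.norm_exp_ofReal_mul_I _
  have hFnorm : ∀ j θ, ‖F j θ‖ = ‖c j‖ * r ^ j := by
    intro j θ
    simp only [hF, norm_mul, norm_pow, map_mul, Complex.norm_real, Real.norm_eq_abs,
      habs1, habs2, mul_one, abs_of_pos hr0]
  have hFcont : ∀ j, Continuous (F j) := by intro j; fun_prop
  have hInt : ∀ j, Integrable (F j) μ := fun j => (hFcont j).integrableOn_Ioc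
  have hIntNorm : ∀ j, (∫ θ, ‖F j θ‖ ∂μ) = (2*π) * (‖c j‖ * r ^ j) := by
    intro j
    simp only [hFnorm]
    rw [integral_const]
    simp [hμ, Real.volume_Ioc, ENNReal.toReal_ofReal h2π.le, Real.pi_pos.le]
  have hSumInt : Summable (fun j => ∫ θ, ‖F j θ‖ ∂μ) :=
    ((hs0.mul_left (2*π)).congr fun j => (hIntNorm j).symm)
  have hkey := MeasureTheory.hasSum_integral_of_summable_integral_norm hInt hSumInt
  have hI : ∀ j, (∫ θ, F j θ ∂μ) = if j = k then c k * (r:ℂ) ^ k * ((2*π : ℝ) : ℂ) else 0 := by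
    intro j
    have hFeq : ∀ θ : ℝ,
        F j θ = (c j * (r:ℂ)^j) * Complex.exp ((((j:ℤ) - (k:ℤ) : ℤ) : ℂ) * Complex.I * θ) := by
      intro θ
      have h1 : ((r:ℂ) * Complex.exp (Complex.I*θ))^j
          = (r:ℂ)^j * Complex.exp ((j:ℂ) * (Complex.I*θ)) := by
        rw [mul_pow, Complex.exp_nat_mul]
      have h2 : ((((j:ℤ) - (k:ℤ) : ℤ) : ℂ) * Complex.I * θ)
          = (j:ℂ) * (Complex.I*θ) + (-(k:ℂ) * Complex.I * θ) := by push_cast; ring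
      simp only [hF]
      rw [h1, h2, Complex.exp_add]; ring
    simp only [hFeq]
    rw [MeasureTheory.integral_const_mul]
    have h3 : (∫ θ : ℝ, Complex.exp ((((j:ℤ)-(k:ℤ):ℤ):ℂ) * Complex.I * θ) ∂μ)
        = if ((j:ℤ)-(k:ℤ)) = 0 then ((2*π : ℝ) : ℂ) else 0 := by
      rw [hμ, ← intervalIntegral.integral_of_le h2π.le]
      exact orth _
    rw [h3]
    rcases eq_or_ne j k with rfl | hjk
    · simp
    · rw [if_neg (by omega), if_neg hjk, mul_zero]
  simp only [hI] at hkey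
  have htsum : ∀ θ : ℝ, (∑' j, F j θ)
      = g ((r:ℂ) * Complex.exp (Complex.I * θ)) * Complex.exp (-(k:ℂ) * Complex.I * θ) :=
    fun θ => ((hsum θ).mul_right _).tsum_eq
  have heq : c k * (r:ℂ)^k * ((2*π : ℝ) : ℂ) = ∫ θ, (∑' j, F j θ) ∂μ :=
    (hasSum_ite_eq k _).unique hkey
  have hb2 : ‖∫ θ, (∑' j, F j θ) ∂μ‖ ≤ B * (2*π) := by
    have hbd : ∀ θ ∈ Set.Ioc (0:ℝ) (2*π), ‖∑' j, F j θ‖ ≤ B := by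
      intro θ _
      rw [htsum θ]
      calc ‖g ((r:ℂ) * Complex.exp (Complex.I * θ)) * Complex.exp (-(k:ℂ) * Complex.I * θ)‖
          = ‖g ((r:ℂ) * Complex.exp (Complex.I * θ))‖ := by
            simp only [norm_mul, habs2, mul_one]
        _ ≤ B := hbound θ
    have := norm_setIntegral_le_of_norm_le_const (μ := volume)
      (s := Set.Ioc (0:ℝ) (2*π)) hμfin hbd
    rwa [Real.volume_real_Ioc_of_le h2π.le, sub_zero] at this
  rw [← heq] at hb2
  have hnorm : ‖c k * (r:ℂ)^k * ((2*π : ℝ) : ℂ)‖ = ‖c k‖ * r ^ k * (2*π) := by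
    simp only [norm_mul, norm_pow, Complex.norm_real, Real.norm_eq_abs]
    rw [abs_of_pos hr0, abs_of_pos (by norm_num : (0:ℝ) < 2), abs_of_pos Real.pi_pos]
  rw [hnorm] at hb2
  exact le_of_mul_le_mul_right (by linarith) h2π

lemma abs_exp_I_mul (θ : ℝ) : ‖Complex.exp (Complex.I * θ)‖ = 1 := by
  rw [mul_comm]; exact Complex.norm_exp_ofReal_mul_I θ

lemma abs_exp_neg_I_mul (θ : ℝ) : ‖Complex.exp (-(Complex.I * θ))‖ = 1 := by
  have h : -(Complex.I * θ) = ((-θ : ℝ) : ℂ) * Complex.I := by push_cast; ring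
  rw [h]; exact Complex.norm_exp_ofReal_mul_I _

lemma rpow_cube {x : ℝ} (hx : 0 ≤ x) (P : ℝ) : (x ^ P) ^ (3:ℕ) = x ^ (3*P) := by
  rw [← Real.rpow_natCast (x^P) 3, ← Real.rpow_mul hx]
  norm_num [mul_comm]

set_option maxHeartbeats 1000000 in
/-- Let `a_{kl}(φ,s)` be the Taylor coefficients of the kernel:
`K_α(φ,s;z,u) = Σ_{k,l} a_{kl}(φ,s) z̄^k u^l`. For every `N,M > 0` there are `A,τ > 0` with
`|a_{kl}(φ,s)| ≤ A(1+k+l)^τ` for all `k,l`, all `φ ∈ [0,2π]`, and all `s` in the rectangle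
`|Im s| ≤ N`, `|Re s| ≤ M`. -/
theorem stmt_12 (α : ℝ) (hα : 1 < α) (a : ℝ → ℂ → ℕ → ℕ → ℂ)
    (hexp : ∀ (φ : ℝ) (s : ℂ), ∀ z ∈ Disk, ∀ u ∈ Disk,
      HasSum (fun kl : ℕ × ℕ => a φ s kl.1 kl.2 * (starRingEnd ℂ z) ^ kl.1 * u ^ kl.2)
        (Kker α φ s z u)) :
    ∀ N > (0:ℝ), ∀ M > (0:ℝ), ∃ A > (0:ℝ), ∃ τ > (0:ℝ),
      ∀ (k l : ℕ) (φ : ℝ) (s : ℂ), φ ∈ Set.Icc (0:ℝ) (2*π) →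
        |s.im| ≤ N → |s.re| ≤ M →
        ‖a φ s k l‖ ≤ A * ((1 + k + l : ℝ) ^ τ) := by
  intro N hN M hM
  set P : ℝ := α + N + 1 with hPdef
  have hPpos : 0 < P := by rw [hPdef]; linarith
  refine ⟨Real.exp 2 * 4 ^ (3*P) * Real.exp (3*π*M), by positivity, 3*P, by linarith, ?_⟩
  intro k l φ s hφ hsim hsre
  have hsim' := abs_le.mp hsim
  have hsre' := abs_le.mp hsre
  -- the radius
  set n : ℕ := k + l + 2 with hn
  have hnR : (2:ℝ) ≤ (n:ℝ) := by exact_mod_cast (by omega : 2 ≤ n)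
  have hnpos : (0:ℝ) < (n:ℝ) := by linarith
  set r : ℝ := 1 - 1/(n:ℝ) with hrdef
  have hinv : (0:ℝ) < 1/(n:ℝ) := by positivity
  have hinv2 : 1/(n:ℝ) ≤ 1/2 := by
    rw [div_le_div_iff₀ hnpos (by norm_num)]; linarith
  have hr0 : 0 < r := by rw [hrdef]; linarith
  have hr1 : r < 1 := by rw [hrdef]; linarith
  -- the holomorphic (in (w,u)) version of the kernel
  set g : ℂ → ℂ → ℂ := fun w u =>
    (1 - w * Complex.exp (Complex.I * φ)) ^ (-(1/2 : ℂ) - Complex.I * s) *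
    (1 - u * Complex.exp (-(Complex.I * φ))) ^ (-(1/2 : ℂ) - Complex.I * s) *
    (1 - w * u) ^ (-((α : ℂ) - 1/2 - Complex.I * s)) with hgdef
  have hmem : ∀ w : ℂ, ‖w‖ < 1 → w ∈ Disk := by
    intro w hw
    simpa [Disk, Metric.mem_ball, Complex.dist_eq] using hw
  have hgsum : ∀ w : ℂ, ‖w‖ < 1 → ∀ u : ℂ, ‖u‖ < 1 →
      HasSum (fun kl : ℕ × ℕ => a φ s kl.1 kl.2 * w ^ kl.1 * u ^ kl.2) (g w u) := by
    intro w hw u hu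
    have hw' : (starRingEnd ℂ) w ∈ Disk := hmem _ (by simpa using hw)
    have h := hexp φ s ((starRingEnd ℂ) w) hw' u (hmem u hu)
    rw [hgdef]
    simp only [Kker, Complex.conj_conj] at h
    exact h
  -- exponent bounds
  have hre1 : |(-(1/2 : ℂ) - Complex.I * s).re| ≤ P := by
    have h : (-(1/2 : ℂ) - Complex.I * s).re = -(1/2) + s.im := by
      simp [Complex.mul_re]
    rw [h, hPdef, abs_le]
    constructor <;> linarith [hsim'.1, hsim'.2]
  have him1 : |(-(1/2 : ℂ) - Complex.I * s).im| ≤ M := by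
    have h : (-(1/2 : ℂ) - Complex.I * s).im = -s.re := by
      simp [Complex.mul_im]
    rw [h, abs_neg]; exact hsre
  have hre3 : |(-((α : ℂ) - 1/2 - Complex.I * s)).re| ≤ P := by
    have h : (-((α : ℂ) - 1/2 - Complex.I * s)).re = -(α - 1/2 + s.im) := by
      simp [Complex.mul_re]
      ring
    rw [h, hPdef, abs_le]
    constructor <;> linarith [hsim'.1, hsim'.2]
  have him3 : |(-((α : ℂ) - 1/2 - Complex.I * s)).im| ≤ M := by
    have h : (-((α : ℂ) - 1/2 - Complex.I * s)).im = s.re := by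
      simp [Complex.mul_im]
    rw [h]; exact hsre
  -- the sup bound on the torus of radius r
  set X : ℝ := (n:ℝ) ^ P * 2 ^ P * Real.exp (π * M) with hXdef
  have hX0 : 0 ≤ X := by rw [hXdef]; positivity
  set B : ℝ := X ^ (3:ℕ) with hBdef
  have hfac : ∀ v : ℂ, ‖v‖ ≤ r → ∀ cc : ℂ, |cc.re| ≤ P → |cc.im| ≤ M →
      ‖(1 - v) ^ cc‖ ≤ X := by
    intro v hv cc h1 h2
    have low : 1/(n:ℝ) ≤ ‖1 - v‖ := by
      have h := norm_sub_norm_le (1:ℂ) v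
      simp only [norm_one] at h
      have : 1 - ‖v‖ ≤ ‖1 - v‖ := h
      rw [hrdef] at hv
      linarith
    have high : ‖1 - v‖ ≤ 2 := by
      have h := norm_sub_le (1:ℂ) v
      simp only [norm_one] at h
      linarith
    have := cpow_bound hinv (by linarith) low high h1 h2
    rwa [one_div, inv_inv, ← hXdef] at this
  have habsw : ∀ θ : ℝ, ‖(r:ℂ) * Complex.exp (Complex.I * θ)‖ = r := by
    intro θ
    rw [norm_mul, Complex.norm_real, Real.norm_eq_abs, abs_exp_I_mul, mul_one, abs_of_pos hr0]
  have hgbd : ∀ θ1 θ2 : ℝ,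
      ‖g ((r:ℂ) * Complex.exp (Complex.I * θ1))
        ((r:ℂ) * Complex.exp (Complex.I * θ2))‖ ≤ B := by
    intro θ1 θ2
    set w : ℂ := (r:ℂ) * Complex.exp (Complex.I * θ1) with hwdef
    set u : ℂ := (r:ℂ) * Complex.exp (Complex.I * θ2) with hudef
    have hwa : ‖w‖ = r := habsw θ1
    have hua : ‖u‖ = r := habsw θ2
    have hf1 : ‖w * Complex.exp (Complex.I * φ)‖ ≤ r := by
      rw [norm_mul, hwa, abs_exp_I_mul, mul_one]
    have hf2 : ‖u * Complex.exp (-(Complex.I * φ))‖ ≤ r := by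
      rw [norm_mul, hua, abs_exp_neg_I_mul, mul_one]
    have hf3 : ‖w * u‖ ≤ r := by
      rw [norm_mul, hwa, hua]
      nlinarith
    have b1 := hfac _ hf1 _ hre1 him1
    have b2 := hfac _ hf2 _ hre1 him1
    have b3 := hfac _ hf3 _ hre3 him3
    calc ‖g w u‖
        = ‖(1 - w * Complex.exp (Complex.I * φ)) ^ (-(1/2 : ℂ) - Complex.I * s)‖ *
          ‖(1 - u * Complex.exp (-(Complex.I * φ))) ^ (-(1/2 : ℂ) - Complex.I * s)‖ *
          ‖(1 - w * u) ^ (-((α : ℂ) - 1/2 - Complex.I * s))‖ := by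
          rw [hgdef]; simp [map_mul]
      _ ≤ X * X * X := by
          apply mul_le_mul _ b3 (norm_nonneg _) (by positivity)
          exact mul_le_mul b1 b2 (norm_nonneg _) hX0
      _ = B := by rw [hBdef]; ring
  -- fiberwise summability
  have hfib : ∀ u : ℂ, ‖u‖ < 1 → ∀ m : ℕ,
      Summable (fun l' => a φ s m l' * u ^ l') := by
    intro u hu m
    have hrd : ‖(r:ℂ)‖ < 1 := by rwa [Complex.norm_real, Real.norm_eq_abs, abs_of_pos hr0]
    have h := (hgsum (r:ℂ) hrd u hu).summable.prod_factor m
    have h2 := h.mul_right (((r:ℂ) ^ m)⁻¹)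
    refine h2.congr fun l' => ?_
    have hrm : ((r:ℂ) ^ m) ≠ 0 := pow_ne_zero _ (by exact_mod_cast hr0.ne')
    field_simp
  -- step 1 : bound on the inner sums
  have step1 : ∀ θu : ℝ, ∀ m : ℕ,
      ‖∑' l', a φ s m l' * ((r:ℂ) * Complex.exp (Complex.I * θu)) ^ l'‖ * r ^ m
        ≤ B := by
    intro θu m
    have huabs : ‖(r:ℂ) * Complex.exp (Complex.I * θu)‖ < 1 := by
      rw [habsw]; exact hr1
    apply coeff_bound
      (fun m' => ∑' l', a φ s m' l' * ((r:ℂ) * Complex.exp (Complex.I * θu)) ^ l')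
      (fun w => g w ((r:ℂ) * Complex.exp (Complex.I * θu))) r B hr0 ?_ ?_ m
    · intro θ
      have hwabs : ‖(r:ℂ) * Complex.exp (Complex.I * θ)‖ < 1 := by
        rw [habsw]; exact hr1
      refine HasSum.prod_fiberwise (hgsum _ hwabs _ huabs) fun m' => ?_
      have h1 := (hfib _ huabs m').hasSum
      have h2 := h1.mul_right (((r:ℂ) * Complex.exp (Complex.I * θ)) ^ m')
      have h3 : (fun l' => a φ s m' l' * ((r:ℂ) * Complex.exp (Complex.I * θ)) ^ m' *
            ((r:ℂ) * Complex.exp (Complex.I * θu)) ^ l')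
          = fun l' => (a φ s m' l' * ((r:ℂ) * Complex.exp (Complex.I * θu)) ^ l') *
            ((r:ℂ) * Complex.exp (Complex.I * θ)) ^ m' := by
        funext l'; ring
      show HasSum (fun l' => a φ s m' l' * ((r:ℂ) * Complex.exp (Complex.I * θ)) ^ m' *
            ((r:ℂ) * Complex.exp (Complex.I * θu)) ^ l') _
      rw [h3]
      exact h2
    · intro θ
      exact hgbd θ θu
  -- step 2 : bound on the coefficients
  have step2 : ‖a φ s k l‖ * r ^ l ≤ B / r ^ k := by
    apply coeff_bound (fun l' => a φ s k l')
      (fun u => ∑' l', a φ s k l' * u ^ l') r (B / r ^ k) hr0 ?_ ?_ l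
    · intro θ
      have huabs : ‖(r:ℂ) * Complex.exp (Complex.I * θ)‖ < 1 := by
        rw [habsw]; exact hr1
      exact (hfib _ huabs k).hasSum
    · intro θ
      rw [le_div_iff₀ (pow_pos hr0 k)]
      exact step1 θ k
  have habd : ‖a φ s k l‖ * r ^ (k + l) ≤ B := by
    rw [le_div_iff₀ (pow_pos hr0 k)] at step2
    calc ‖a φ s k l‖ * r ^ (k + l)
        = ‖a φ s k l‖ * r ^ l * r ^ k := by rw [pow_add]; ring
      _ ≤ B := step2
  -- lower bound on r ^ (k+l)
  have hrkl : Real.exp (-2) ≤ r ^ (k + l) := by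
    have h1 : r ^ n ≤ r ^ (k + l) :=
      pow_le_pow_of_le_one hr0.le hr1.le (by omega)
    have h2 : Real.exp (-(2 * (1/(n:ℝ)))) ≤ r := by
      rw [hrdef]; exact exp_neg_two_mul_le hinv hinv2
    have h3 : (Real.exp (-(2 * (1/(n:ℝ))))) ^ n ≤ r ^ n :=
      pow_le_pow_left₀ (Real.exp_nonneg _) h2 n
    have h4 : (Real.exp (-(2 * (1/(n:ℝ))))) ^ n = Real.exp (-2) := by
      rw [← Real.exp_nat_mul]
      congr 1
      field_simp
    rw [h4] at h3
    linarith
  -- assemble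
  have h5 : ‖a φ s k l‖ * Real.exp (-2) ≤ B :=
    le_trans (mul_le_mul_of_nonneg_left hrkl (norm_nonneg _)) habd
  have h6 : ‖a φ s k l‖ ≤ B * Real.exp 2 := by
    have := mul_le_mul_of_nonneg_right h5 (Real.exp_nonneg 2)
    rw [mul_assoc, ← Real.exp_add] at this
    norm_num at this
    exact this
  refine le_trans h6 ?_
  -- final arithmetic
  have hone : (0:ℝ) ≤ 1 + (k:ℝ) + (l:ℝ) := by positivity
  have h3P : (0:ℝ) ≤ 3*P := by linarith
  have hnle : (n:ℝ) ≤ 2 * (1 + (k:ℝ) + (l:ℝ)) := by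
    have hcast : (n:ℝ) = (k:ℝ) + (l:ℝ) + 2 := by rw [hn]; push_cast; ring
    rw [hcast]; linarith [Nat.cast_nonneg (α := ℝ) k, Nat.cast_nonneg (α := ℝ) l]
  have hc1 : (n:ℝ) ^ (3*P) ≤ (2:ℝ) ^ (3*P) * (1 + (k:ℝ) + (l:ℝ)) ^ (3*P) := by
    rw [← Real.mul_rpow (by norm_num) hone]
    exact Real.rpow_le_rpow (by positivity) hnle h3P
  have hc2 : (2:ℝ) ^ (3*P) * (2:ℝ) ^ (3*P) = (4:ℝ) ^ (3*P) := by
    rw [← Real.mul_rpow (by norm_num) (by norm_num)]; norm_num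
  have hBexp : B = (n:ℝ) ^ (3*P) * (2:ℝ) ^ (3*P) * Real.exp (3*π*M) := by
    rw [hBdef, hXdef, mul_pow, mul_pow, rpow_cube (by positivity), rpow_cube (by norm_num),
      ← Real.exp_nat_mul, show ((3:ℕ):ℝ) * (π*M) = 3*π*M by push_cast; ring]
  rw [hBexp]
  calc (n:ℝ) ^ (3*P) * (2:ℝ) ^ (3*P) * Real.exp (3*π*M) * Real.exp 2
      ≤ ((2:ℝ) ^ (3*P) * (1 + (k:ℝ) + (l:ℝ)) ^ (3*P)) * (2:ℝ) ^ (3*P) *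
          Real.exp (3*π*M) * Real.exp 2 := by
        have hpos : (0:ℝ) ≤ (2:ℝ) ^ (3*P) * Real.exp (3*π*M) * Real.exp 2 := by positivity
        nlinarith [Real.rpow_nonneg (show (0:ℝ) ≤ 2 by norm_num) (3*P),
          Real.exp_nonneg (3*π*M), Real.exp_nonneg 2,
          Real.rpow_nonneg hone (3*P), Real.rpow_nonneg (le_trans (by norm_num) hnR) (3*P)]
      _ = Real.exp 2 * ((2:ℝ) ^ (3*P) * (2:ℝ) ^ (3*P)) * Real.exp (3*π*M) *
          (1 + (k:ℝ) + (l:ℝ)) ^ (3*P) := by ring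
      _ = Real.exp 2 * 4 ^ (3*P) * Real.exp (3*π*M) * (1 + (k:ℝ) + (l:ℝ)) ^ (3*P) := by
          rw [hc2]
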